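/- arXiv:2206.00163 — 6 statements merged into one kernel-verified Lean document; each statement's English description precedes it below -/
import Mathlib

section
/- The Jacobi triple product identity: for |q|<1 and x≠0, the sum over all integers n of q^{n^2} x^n equals the infinite product over n≥1 of (1+xq^{2n-1})(1+x^{-1}q^{2n-1})(1-q^{2n}). -/
/-!
Put `p = q²`, `m = 2N` and `t = x q^(1-2N)` into the finite `q`-binomial theorem
`∏_{i<m} (1 + t pⁱ) = ∑_k [m, k]_p p^(k choose 2) tᵏ`. Reflecting the first `N` factors turns it
into the finite triple product
`∏_{j<N} (1 + x q^(2j+1)) (1 + x⁻¹ q^(2j+1)) = ∑_{|n| ≤ N} [2N, N+n]_{q²} q^(n²) xⁿ`.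
For `‖p‖ < 1` the Gaussian binomials `[m, k]_p = (p;p)_m / ((p;p)_k (p;p)_(m-k))` are uniformly
bounded and tend to `1 / (p;p)_∞` as `k` and `m - k` tend to infinity, so by Tannery's theorem the
right-hand side tends to `(∑_n q^(n²) xⁿ) / (q²;q²)_∞`. Multiplying by `(q²;q²)_N` gives the
identity.
-/

open Finset Filter Topology

theorem two_mul_choose_two_add_self (k : ℕ) : 2 * k.choose 2 + k = k ^ 2 := by
  induction k with
  | zero => rfl
  | succ k ih => rw [Nat.choose_succ_succ, Nat.choose_one_right]; linear_combination ih

section QBinomial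

variable {R : Type*}

def qPochhammer [CommRing R] (p : R) (m : ℕ) : R := ∏ j ∈ range m, (1 - p ^ (j + 1))

def qBinomial [CommSemiring R] (p : R) : ℕ → ℕ → R
  | _, 0 => 1
  | 0, _ + 1 => 0
  | m + 1, k + 1 => qBinomial p m k + p ^ (k + 1) * qBinomial p m (k + 1)

theorem qBinomial_eq_zero_of_lt [CommSemiring R] (p : R) {m k : ℕ} (h : m < k) :
    qBinomial p m k = 0 := by
  induction m generalizing k with
  | zero => obtain ⟨k, rfl⟩ := Nat.exists_eq_succ_of_ne_zero h.ne'; rfl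
  | succ m ih =>
    obtain ⟨k, rfl⟩ := Nat.exists_eq_succ_of_ne_zero (by omega : k ≠ 0)
    rw [qBinomial, ih (by omega), ih (by omega), mul_zero, add_zero]

theorem prod_range_one_add_mul_pow [CommSemiring R] (p t : R) (m : ℕ) :
    ∏ i ∈ range m, (1 + t * p ^ i) =
      ∑ k ∈ range (m + 1), qBinomial p m k * p ^ k.choose 2 * t ^ k := by
  induction m generalizing t with
  | zero => simp [qBinomial]
  | succ m ih =>
    have hprod : ∏ i ∈ range (m + 1), (1 + t * p ^ i) =
        (1 + t) * ∏ i ∈ range m, (1 + t * p * p ^ i) := by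
      rw [prod_range_succ', pow_zero, mul_one, mul_comm]
      exact congrArg _ (prod_congr rfl fun i _ => by ring)
    have hS : ∑ k ∈ range (m + 1), qBinomial p m k * p ^ k.choose 2 * (t * p) ^ k =
        1 + ∑ k ∈ range (m + 1),
          qBinomial p m (k + 1) * p ^ (k + 1).choose 2 * (t * p) ^ (k + 1) := by
      rw [sum_range_succ', sum_range_succ _ m, qBinomial_eq_zero_of_lt p (Nat.lt_succ_self m)]
      simp [qBinomial, add_comm]
    rw [hprod, ih, add_mul, one_mul]
    nth_rewrite 1 [hS]
    rw [mul_sum, sum_range_succ' _ (m + 1), add_assoc, ← sum_add_distrib, add_comm]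
    simp only [qBinomial, Nat.choose_succ_succ, Nat.choose_one_right]
    exact congrArg₂ _ (sum_congr rfl fun k _ => by ring) (by simp)

theorem qPochhammer_succ [CommRing R] (p : R) (m : ℕ) :
    qPochhammer p (m + 1) = qPochhammer p m * (1 - p ^ (m + 1)) :=
  prod_range_succ _ _

theorem qBinomial_mul_qPochhammer_mul_qPochhammer [CommRing R] (p : R) {m k : ℕ} (hk : k ≤ m) :
    qBinomial p m k * qPochhammer p k * qPochhammer p (m - k) = qPochhammer p m := by
  induction m generalizing k with
  | zero => simp [Nat.le_zero.1 hk, qBinomial, qPochhammer]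
  | succ m ih =>
    rcases k with _ | k
    · simp [qBinomial, qPochhammer]
    rw [qBinomial, Nat.add_sub_add_right, qPochhammer_succ p m, qPochhammer_succ p k]
    rcases (Nat.lt_succ_iff.1 hk).eq_or_lt with rfl | hlt
    · rw [qBinomial_eq_zero_of_lt p (Nat.lt_succ_self k)]
      linear_combination (1 - p ^ (k + 1)) * ih le_rfl
    · obtain ⟨d, rfl⟩ := Nat.exists_eq_add_of_lt hlt
      have h1 := ih (k := k) (by omega)
      have h2 := ih (k := k + 1) (by omega)
      rw [show k + d + 1 - (k + 1) = d by omega, qPochhammer_succ] at h2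
      rw [show k + d + 1 - k = d + 1 by omega, qPochhammer_succ] at h1 ⊢
      linear_combination (1 - p ^ (k + 1)) * h1 + p ^ (k + 1) * (1 - p ^ (d + 1)) * h2

end QBinomial

section FiniteIdentity

variable {K : Type*} [Field K] {q x : K}

theorem prod_range_two_mul_one_add_mul_sq_pow (hq : q ≠ 0) (hx : x ≠ 0) (N : ℕ) :
    ∏ i ∈ range (2 * N), (1 + x * q / q ^ (2 * N) * (q ^ 2) ^ i) =
      x ^ N / q ^ (N ^ 2) *
        ∏ j ∈ range N, ((1 + x * q ^ (2 * j + 1)) * (1 + x⁻¹ * q ^ (2 * j + 1))) := by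
  have hlow : ∀ j ∈ range N, 1 + x * q / q ^ (2 * N) * (q ^ 2) ^ (N - 1 - j) =
      x / q ^ (2 * j + 1) * (1 + x⁻¹ * q ^ (2 * j + 1)) := fun j hj => by
    have e : q ^ (2 * N) = q * (q ^ 2) ^ (N - 1 - j) * q ^ (2 * j + 1) := by
      rw [← pow_mul, ← pow_succ', ← pow_add]
      exact congrArg _ (by simp at hj; omega)
    rw [e]
    field_simp
    ring
  have hhigh : ∀ j ∈ range N, 1 + x * q / q ^ (2 * N) * (q ^ 2) ^ (N + j) =
      1 + x * q ^ (2 * j + 1) := fun j _ => by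
    rw [← pow_mul]
    field_simp
    ring
  have hodd : ∀ n : ℕ, ∏ j ∈ range n, x / q ^ (2 * j + 1) = x ^ n / q ^ (n ^ 2) := fun n => by
    induction n with
    | zero => simp
    | succ n ih => rw [prod_range_succ, ih]; field_simp; ring
  rw [two_mul, prod_range_add, ← two_mul, ← prod_range_reflect _ N, prod_congr rfl hlow,
    prod_congr rfl hhigh, prod_mul_distrib, hodd, prod_mul_distrib]
  ring

theorem pow_sq_div_pow_mul_eq_zpow (hq : q ≠ 0) (hx : x ≠ 0) (N k : ℕ) :
    q ^ (N ^ 2) / x ^ N * ((q ^ 2) ^ k.choose 2 * (x * q / q ^ (2 * N)) ^ k) =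
      q ^ (((k : ℤ) - N) ^ 2) * x ^ ((k : ℤ) - N) := by
  have hsq : ((k : ℤ) - N) ^ 2 = ((k ^ 2 + N ^ 2 : ℕ) : ℤ) - ((2 * N * k : ℕ) : ℤ) := by
    push_cast; ring
  rw [hsq, zpow_sub₀ hq, zpow_sub₀ hx, zpow_natCast, zpow_natCast, zpow_natCast, zpow_natCast,
    ← two_mul_choose_two_add_self k, div_pow, mul_pow, ← pow_mul, ← pow_mul, pow_add, pow_add]
  field_simp

theorem finite_jacobi_triple_product (hq : q ≠ 0) (hx : x ≠ 0) (N : ℕ) :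
    ∏ j ∈ range N, ((1 + x * q ^ (2 * j + 1)) * (1 + x⁻¹ * q ^ (2 * j + 1))) =
      ∑ n ∈ Icc (-N : ℤ) N, qBinomial (q ^ 2) (2 * N) (N + n).toNat * (q ^ (n ^ 2) * x ^ n) := by
  have hgauss := prod_range_one_add_mul_pow (q ^ 2) (x * q / q ^ (2 * N)) (2 * N)
  rw [prod_range_two_mul_one_add_mul_sq_pow hq hx] at hgauss
  calc _ = q ^ (N ^ 2) / x ^ N * (x ^ N / q ^ (N ^ 2) * ∏ j ∈ range N,
          ((1 + x * q ^ (2 * j + 1)) * (1 + x⁻¹ * q ^ (2 * j + 1)))) := by field_simp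
    _ = ∑ k ∈ range (2 * N + 1), qBinomial (q ^ 2) (2 * N) k *
          (q ^ (((k : ℤ) - N) ^ 2) * x ^ ((k : ℤ) - N)) := by
      rw [hgauss, mul_sum]
      refine sum_congr rfl fun k _ => ?_
      rw [← pow_sq_div_pow_mul_eq_zpow hq hx]
      ring
    _ = _ := by
      refine sum_nbij' (fun k => (k : ℤ) - N) (fun n => (N + n).toNat) ?_ ?_ ?_ ?_ ?_ <;>
        intro k hk <;> simp only [mem_range, mem_Icc] at hk ⊢
      all_goals first | omega | rw [show ((N : ℤ) + (k - N)).toNat = k by omega]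

theorem qBinomial_eq_div {p : K} (hp : ∀ n, qPochhammer p n ≠ 0) {m k : ℕ} (hk : k ≤ m) :
    qBinomial p m k = qPochhammer p m / (qPochhammer p k * qPochhammer p (m - k)) := by
  rw [eq_div_iff (mul_ne_zero (hp k) (hp _)), ← mul_assoc,
    qBinomial_mul_qPochhammer_mul_qPochhammer p hk]

end FiniteIdentity

section Analytic

variable {𝕜 : Type*} [NormedField 𝕜]

theorem summable_norm_mul_pow_two_mul_add {q : 𝕜} (hq : ‖q‖ < 1) (c : 𝕜) (a : ℕ) :
    Summable fun n : ℕ => ‖c * q ^ (2 * n + a)‖ := by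
  have hq2 : ‖q‖ ^ 2 < 1 := pow_lt_one₀ (norm_nonneg q) hq two_ne_zero
  refine ((summable_geometric_of_lt_one (by positivity) hq2).mul_left (‖c‖ * ‖q‖ ^ a)).congr
    fun n => ?_
  rw [norm_mul, norm_pow, pow_add, pow_mul]
  ring

theorem summable_norm_pow_succ {p : 𝕜} (hp : ‖p‖ < 1) :
    Summable fun j : ℕ => ‖p ^ (j + 1)‖ := by
  simpa [pow_succ] using (summable_geometric_of_lt_one (norm_nonneg p) hp).mul_right ‖p‖

theorem one_sub_pow_succ_ne_zero {p : 𝕜} (hp : ‖p‖ < 1) (j : ℕ) : 1 - p ^ (j + 1) ≠ 0 := by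
  have h : ‖p ^ (j + 1)‖ < 1 := by
    rw [norm_pow]
    exact pow_lt_one₀ (norm_nonneg p) hp j.succ_ne_zero
  exact sub_ne_zero.2 fun h1 => by rw [← h1, norm_one] at h; exact lt_irrefl _ h

theorem qPochhammer_ne_zero {p : 𝕜} (hp : ‖p‖ < 1) (m : ℕ) : qPochhammer p m ≠ 0 :=
  prod_ne_zero_iff.2 fun j _ => one_sub_pow_succ_ne_zero hp j

theorem multipliable_one_sub_pow [CompleteSpace 𝕜] {p : 𝕜} (hp : ‖p‖ < 1) :
    Multipliable fun j : ℕ => 1 - p ^ (j + 1) := by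
  simpa [sub_eq_add_neg] using multipliable_one_add_of_summable
    (f := fun j : ℕ => -(p ^ (j + 1))) (by simpa using summable_norm_pow_succ hp)

theorem tprod_one_sub_pow_ne_zero [CompleteSpace 𝕜] {p : 𝕜} (hp : ‖p‖ < 1) :
    ∏' j : ℕ, (1 - p ^ (j + 1)) ≠ 0 := by
  simpa [sub_eq_add_neg] using tprod_one_add_ne_zero_of_summable
    (f := fun j : ℕ => -(p ^ (j + 1))) (by simpa [sub_eq_add_neg] using one_sub_pow_succ_ne_zero hp)
    (by simpa using summable_norm_pow_succ hp)

theorem tendsto_qPochhammer [CompleteSpace 𝕜] {p : 𝕜} (hp : ‖p‖ < 1) :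
    Tendsto (qPochhammer p) atTop (𝓝 (∏' j : ℕ, (1 - p ^ (j + 1)))) :=
  (multipliable_one_sub_pow hp).hasProd.tendsto_prod_nat

theorem exists_norm_qBinomial_le [CompleteSpace 𝕜] {p : 𝕜} (hp : ‖p‖ < 1) :
    ∃ C, ∀ m k, ‖qBinomial p m k‖ ≤ C := by
  obtain ⟨A, hA⟩ := isBounded_iff_forall_norm_le.1
    (Metric.isBounded_range_of_tendsto _ (tendsto_qPochhammer hp))
  obtain ⟨B, hB⟩ := isBounded_iff_forall_norm_le.1 (Metric.isBounded_range_of_tendsto _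
    ((tendsto_qPochhammer hp).inv₀ (tprod_one_sub_pow_ne_zero hp)))
  have hA0 : 0 ≤ A := (norm_nonneg _).trans (hA _ ⟨0, rfl⟩)
  have hB0 : 0 ≤ B := (norm_nonneg _).trans (hB _ ⟨0, rfl⟩)
  refine ⟨A * B * B, fun m k => ?_⟩
  rcases le_or_gt k m with hk | hk
  · rw [qBinomial_eq_div (qPochhammer_ne_zero hp) hk, div_eq_mul_inv, mul_inv, ← mul_assoc,
      norm_mul, norm_mul]
    gcongr
    exacts [hA _ ⟨m, rfl⟩, hB _ ⟨k, rfl⟩, hB _ ⟨m - k, rfl⟩]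
  · rw [qBinomial_eq_zero_of_lt p hk, norm_zero]
    positivity

theorem tendsto_qBinomial [CompleteSpace 𝕜] {p : 𝕜} (hp : ‖p‖ < 1) {ι : Type*} {l : Filter ι}
    {m k : ι → ℕ} (hk : Tendsto k l atTop) (hmk : Tendsto (fun i => m i - k i) l atTop) :
    Tendsto (fun i => qBinomial p (m i) (k i)) l (𝓝 (∏' j : ℕ, (1 - p ^ (j + 1)))⁻¹) := by
  have hP := tprod_one_sub_pow_ne_zero hp
  have hm : Tendsto m l atTop := tendsto_atTop_mono (fun i => Nat.sub_le _ _) hmk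
  have hlim := ((tendsto_qPochhammer hp).comp hm).div
    (((tendsto_qPochhammer hp).comp hk).mul ((tendsto_qPochhammer hp).comp hmk)) (mul_ne_zero hP hP)
  rw [div_mul_cancel_left₀ hP] at hlim
  refine hlim.congr' ?_
  filter_upwards [hmk.eventually_ge_atTop 1] with i hi
  exact (qBinomial_eq_div (qPochhammer_ne_zero hp) (by omega)).symm

theorem summable_norm_pow_sq_mul_pow {q : 𝕜} (hq : ‖q‖ < 1) (x : 𝕜) :
    Summable fun n : ℕ => ‖q ^ (n ^ 2) * x ^ n‖ := by
  have h : Tendsto (fun n : ℕ => ‖q‖ ^ n * ‖x‖) atTop (𝓝 0) := by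
    simpa using (tendsto_pow_atTop_nhds_zero_of_lt_one (norm_nonneg q) hq).mul_const ‖x‖
  refine summable_geometric_two.of_norm_bounded_eventually_nat ?_
  filter_upwards [h.eventually_le_const (by norm_num : (0 : ℝ) < 1 / 2)] with n hn
  rw [norm_norm, norm_mul, norm_pow, norm_pow, sq, pow_mul, ← mul_pow]
  exact pow_le_pow_left₀ (by positivity) hn n

theorem summable_norm_zpow_sq_mul_zpow {q : 𝕜} (hq : ‖q‖ < 1) (x : 𝕜) :
    Summable fun n : ℤ => ‖q ^ (n ^ 2) * x ^ n‖ := by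
  refine .of_nat_of_neg ?_ ?_
  · simpa only [← Nat.cast_pow, zpow_natCast] using summable_norm_pow_sq_mul_pow hq x
  · simpa only [neg_sq, zpow_neg, ← Nat.cast_pow, zpow_natCast, inv_pow] using
      summable_norm_pow_sq_mul_pow hq x⁻¹

theorem tendsto_prod_one_add_mul_one_add_inv_mul [CompleteSpace 𝕜] {q x : 𝕜} (hq : ‖q‖ < 1)
    (hq0 : q ≠ 0) (hx : x ≠ 0) :
    Tendsto (fun N => ∏ j ∈ range N, ((1 + x * q ^ (2 * j + 1)) * (1 + x⁻¹ * q ^ (2 * j + 1))))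
      atTop (𝓝 ((∑' n : ℤ, q ^ (n ^ 2) * x ^ n) / ∏' j : ℕ, (1 - (q ^ 2) ^ (j + 1)))) := by
  have hq2 : ‖q ^ 2‖ < 1 := by rw [norm_pow]; exact pow_lt_one₀ (norm_nonneg q) hq two_ne_zero
  obtain ⟨C, hC⟩ := exists_norm_qBinomial_le hq2
  let F : ℕ → ℤ → 𝕜 := fun N n =>
    if n ∈ Icc (-N : ℤ) N then qBinomial (q ^ 2) (2 * N) (N + n).toNat * (q ^ (n ^ 2) * x ^ n)
    else 0
  have hF : ∀ N, ∑' n, F N n =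
      ∏ j ∈ range N, ((1 + x * q ^ (2 * j + 1)) * (1 + x⁻¹ * q ^ (2 * j + 1))) := fun N => by
    rw [tsum_eq_sum (s := Icc (-N : ℤ) N) fun n hn => if_neg hn,
      finite_jacobi_triple_product hq0 hx]
    exact sum_congr rfl fun n hn => if_pos hn
  have hlim : ∀ n : ℤ, Tendsto (fun N => F N n) atTop
      (𝓝 ((∏' j : ℕ, (1 - (q ^ 2) ^ (j + 1)))⁻¹ * (q ^ (n ^ 2) * x ^ n))) := fun n => by
    have h := tendsto_qBinomial hq2 (m := fun N => 2 * N) (k := fun N => (N + n).toNat)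
      (tendsto_atTop_atTop.2 fun b => ⟨b + n.natAbs, fun N hN => by omega⟩)
      (tendsto_atTop_atTop.2 fun b => ⟨b + n.natAbs, fun N hN => by omega⟩)
    refine (h.mul_const _).congr' ?_
    filter_upwards [eventually_ge_atTop n.natAbs] with N hN
    exact (if_pos (mem_Icc.2 ⟨by omega, by omega⟩)).symm
  have hbound : ∀ N n, ‖F N n‖ ≤ C * ‖q ^ (n ^ 2) * x ^ n‖ := fun N n => by
    simp only [F]
    split_ifs
    · rw [norm_mul]
      exact mul_le_mul_of_nonneg_right (hC _ _) (norm_nonneg _)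
    · rw [norm_zero]
      exact mul_nonneg ((norm_nonneg _).trans (hC 0 0)) (norm_nonneg _)
  simpa only [hF, tsum_mul_left, div_eq_inv_mul] using tendsto_tsum_of_dominated_convergence
    ((summable_norm_zpow_sq_mul_zpow hq x).mul_left C) hlim (.of_forall hbound)

end Analytic

/-- Jacobi triple product identity: for `‖q‖ < 1` and `x ≠ 0`,
`∑_{n ∈ ℤ} q^(n²) xⁿ = ∏_{n ≥ 1} (1 + x q^(2n-1))(1 + x⁻¹ q^(2n-1))(1 - q^(2n))`. -/
theorem jacobi_triple_product (q x : ℂ) (hq : ‖q‖ < 1) (hx : x ≠ 0) :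
    ∑' n : ℤ, q ^ (n ^ 2) * x ^ n =
      ∏' n : ℕ, ((1 + x * q ^ (2 * n + 1)) * (1 + x⁻¹ * q ^ (2 * n + 1)) *
        (1 - q ^ (2 * n + 2))) := by
  rcases eq_or_ne q 0 with rfl | hq0
  · rw [tsum_eq_single 0 fun n hn => by rw [zero_zpow _ (pow_ne_zero 2 hn), zero_mul]]
    simp
  have hq2 : ‖q ^ 2‖ < 1 := by rw [norm_pow]; exact pow_lt_one₀ (norm_nonneg q) hq two_ne_zero
  have hlim := (tendsto_prod_one_add_mul_one_add_inv_mul hq hq0 hx).mul (tendsto_qPochhammer hq2)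
  rw [div_mul_cancel₀ _ (tprod_one_sub_pow_ne_zero hq2)] at hlim
  have hfactor : ∀ n : ℕ, 1 - q ^ (2 * n + 2) = 1 - (q ^ 2) ^ (n + 1) := fun n => by ring
  simp_rw [hfactor]
  have hmult := ((multipliable_one_add_of_summable (summable_norm_mul_pow_two_mul_add hq x 1)).mul
    (multipliable_one_add_of_summable (summable_norm_mul_pow_two_mul_add hq x⁻¹ 1))).mul
    (multipliable_one_sub_pow hq2)
  exact tendsto_nhds_unique hlim (hmult.hasProd.tendsto_prod_nat.congr fun N => prod_mul_distrib)
end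

section
/- θ₃(q)⁴ = θ₂(q)⁴ + θ₄(q)⁴, where θ₂(q)=∑_{n∈ℤ} q^{(n+1/2)²}, θ₃(q)=∑_{n∈ℤ} q^{n²}, θ₄(q)=∑_{n∈ℤ} (-1)ⁿ q^{n²}. -/
open Complex

/-- Jacobi theta null value `θ₂(q) = ∑_{n ∈ ℤ} q^((n+1/2)²)` (complex powers). -/
noncomputable def theta2 (q : ℂ) : ℂ := ∑' n : ℤ, q ^ ((((n : ℂ) + 1/2) ^ 2))

/-- Jacobi theta null value `θ₃(q) = ∑_{n ∈ ℤ} q^(n²)`. -/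
noncomputable def theta3 (q : ℂ) : ℂ := ∑' n : ℤ, q ^ (n ^ 2)

/-- Jacobi theta null value `θ₄(q) = ∑_{n ∈ ℤ} (-1)ⁿ q^(n²)`. -/
noncomputable def theta4 (q : ℂ) : ℂ := ∑' n : ℤ, (-1 : ℂ) ^ n * q ^ (n ^ 2)

/-!
Write `Q p = ∑ pᵢ²` and `S p = ∑ pᵢ` for `p ∈ ℤ⁴`. Expanding the fourth powers gives
`θ₃⁴ - θ₄⁴ = ∑ₚ (1 - (-1) ^ S p) q ^ Q p = 2 ∑_{S y odd} q ^ Q y` and, since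
`∑ (pᵢ + 1/2)² = Q p + S p + 1`, `θ₂⁴ = ∑ₚ q ^ (Q p + S p + 1)`. This last sum is also
`2 ∑_{S y odd} q ^ Q y`: the `p` with `S p` odd are mapped bijectively onto `{y | S y odd}` by the
reflection `p ↦ k - p` with `2k = S p + 1`, and the `p` with `S p` even by `p ↦ H p / 2 + e₁`, where
`H` is the `4 × 4` Hadamard matrix; both maps turn `Q p + S p + 1` into `Q y`.
-/

local notation "ℤ⁴" => ℤ × ℤ × ℤ × ℤ

def sumSq (p : ℤ⁴) : ℤ := p.1 ^ 2 + p.2.1 ^ 2 + p.2.2.1 ^ 2 + p.2.2.2 ^ 2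

def coordSum (p : ℤ⁴) : ℤ := p.1 + p.2.1 + p.2.2.1 + p.2.2.2

def oddCoordSum : Set ℤ⁴ := {p | Odd (coordSum p)}

lemma coordSum_add (x y : ℤ⁴) : coordSum (x + y) = coordSum x + coordSum y := by
  simp only [coordSum, Prod.fst_add, Prod.snd_add]; ring

lemma even_coordSum_sub_single {y : ℤ⁴} (hy : Odd (coordSum y)) :
    Even (coordSum (y - (1, 0, 0, 0))) := by
  have : coordSum (y - (1, 0, 0, 0)) = coordSum y - 1 := by
    simp only [coordSum, Prod.fst_sub, Prod.snd_sub]; ring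
  rw [this]; exact hy.sub_odd odd_one

lemma sumSq_add_single (x : ℤ⁴) : sumSq (x + (1, 0, 0, 0)) = sumSq x + 2 * x.1 + 1 := by
  simp only [sumSq, Prod.fst_add, Prod.snd_add]; ring

def diagReflect (k : ℤ) (p : ℤ⁴) : ℤ⁴ := (k - p.1, k - p.2.1, k - p.2.2.1, k - p.2.2.2)

lemma diagReflect_diagReflect (k : ℤ) (p : ℤ⁴) : diagReflect k (diagReflect k p) = p := by
  simp [diagReflect]

lemma coordSum_diagReflect (k : ℤ) (p : ℤ⁴) : coordSum (diagReflect k p) = 4 * k - coordSum p := by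
  simp only [coordSum, diagReflect]; ring

lemma sumSq_diagReflect {k : ℤ} {p : ℤ⁴} (hk : 2 * k = coordSum p + 1) :
    sumSq (diagReflect k p) = sumSq p + coordSum p + 1 := by
  simp only [sumSq, diagReflect, coordSum] at hk ⊢
  linear_combination (2 * k + 1) * hk

def diagReflectEquiv : oddCoordSum ≃ oddCoordSum where
  toFun p := ⟨diagReflect ((coordSum p + 1) / 2) p, by
    have := Int.odd_iff.mp p.2
    exact Int.odd_iff.mpr (by rw [coordSum_diagReflect]; omega)⟩
  invFun y := ⟨diagReflect ((coordSum y - 1) / 2) y, by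
    have := Int.odd_iff.mp y.2
    exact Int.odd_iff.mpr (by rw [coordSum_diagReflect]; omega)⟩
  left_inv p := by
    have := Int.odd_iff.mp p.2
    have hk : (coordSum (diagReflect ((coordSum p + 1) / 2) p) - 1) / 2 = (coordSum p + 1) / 2 := by
      rw [coordSum_diagReflect]; omega
    exact Subtype.ext (by simp only [hk, diagReflect_diagReflect])
  right_inv y := by
    have := Int.odd_iff.mp y.2
    have hk : (coordSum (diagReflect ((coordSum y - 1) / 2) y) + 1) / 2 = (coordSum y - 1) / 2 := by
      rw [coordSum_diagReflect]; omega
    exact Subtype.ext (by simp only [hk, diagReflect_diagReflect])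

lemma sumSq_diagReflectEquiv (p : oddCoordSum) :
    sumSq (diagReflectEquiv p) = sumSq p + coordSum p + 1 :=
  sumSq_diagReflect (by have := Int.odd_iff.mp p.2; omega)

/-- `H p / 2` for the `4 × 4` Hadamard matrix `H`, when `coordSum p` is even. -/
def halfHadamard (p : ℤ⁴) : ℤ⁴ :=
  let k := coordSum p / 2
  (k, k - p.2.2.1 - p.2.2.2, k - p.2.1 - p.2.2.2, k - p.2.1 - p.2.2.1)

lemma coordSum_halfHadamard {p : ℤ⁴} (hp : Even (coordSum p)) :
    coordSum (halfHadamard p) = 2 * p.1 := by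
  obtain ⟨a, b, c, d⟩ := p
  simp only [coordSum, halfHadamard] at hp ⊢
  have := Int.even_iff.mp hp
  omega

lemma halfHadamard_halfHadamard {p : ℤ⁴} (hp : Even (coordSum p)) :
    halfHadamard (halfHadamard p) = p := by
  have h := coordSum_halfHadamard hp
  obtain ⟨a, b, c, d⟩ := p
  simp only [coordSum, halfHadamard] at hp h ⊢
  have := Int.even_iff.mp hp
  ext <;> simp only [h] <;> omega

lemma sumSq_halfHadamard {p : ℤ⁴} (hp : Even (coordSum p)) :
    sumSq (halfHadamard p) = sumSq p := by
  obtain ⟨k, hk⟩ := hp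
  obtain ⟨a, b, c, d⟩ := p
  simp only [coordSum, halfHadamard, sumSq] at hk ⊢
  rw [hk, show (k + k) / 2 = k by omega]
  obtain rfl : a = k + k - b - c - d := by omega
  ring

def hadamardEquiv : ↥oddCoordSumᶜ ≃ oddCoordSum where
  toFun p := ⟨halfHadamard p + (1, 0, 0, 0), by
    have hp := Int.not_odd_iff_even.mp p.2
    show Odd (coordSum _)
    rw [coordSum_add, coordSum_halfHadamard hp,
      show coordSum (1, 0, 0, 0) = 1 from rfl]
    exact odd_two_mul_add_one _⟩
  invFun y := ⟨halfHadamard ((y : ℤ⁴) - (1, 0, 0, 0)), by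
    have hy := even_coordSum_sub_single y.2
    show ¬Odd (coordSum _)
    rw [coordSum_halfHadamard hy, Int.not_odd_iff_even]
    exact even_two_mul _⟩
  left_inv p := Subtype.ext <| by
    simp [halfHadamard_halfHadamard (Int.not_odd_iff_even.mp p.2)]
  right_inv y := Subtype.ext <| by
    simp [halfHadamard_halfHadamard (even_coordSum_sub_single y.2)]

lemma sumSq_hadamardEquiv (p : ↥oddCoordSumᶜ) :
    sumSq (hadamardEquiv p) = sumSq p + coordSum p + 1 := by
  have hp := Int.not_odd_iff_even.mp p.2
  change sumSq (halfHadamard p + (1, 0, 0, 0)) = _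
  rw [sumSq_add_single, sumSq_halfHadamard hp]
  simp only [halfHadamard, Int.two_mul_ediv_two_of_even hp]

lemma tsum_sumSq_add_coordSum_add_one {f : ℤ → ℂ}
    (hf : Summable fun p : ℤ⁴ => f (sumSq p + coordSum p + 1)) :
    ∑' p : ℤ⁴, f (sumSq p + coordSum p + 1) = 2 * ∑' y : oddCoordSum, f (sumSq y) := by
  rw [← hf.tsum_subtype_add_tsum_subtype_compl oddCoordSum, two_mul]
  congr 1
  · rw [← diagReflectEquiv.tsum_eq (fun y : oddCoordSum => f (sumSq y))]
    simp only [sumSq_diagReflectEquiv]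
  · rw [← hadamardEquiv.tsum_eq (fun y : oddCoordSum => f (sumSq y))]
    simp only [sumSq_hadamardEquiv]

lemma tsum_sub_tsum_neg_one_zpow_mul {g : ℤ⁴ → ℂ} (hg : Summable g)
    (hg' : Summable fun p => (-1 : ℂ) ^ coordSum p * g p) :
    ∑' p, g p - ∑' p, (-1 : ℂ) ^ coordSum p * g p = 2 * ∑' y : oddCoordSum, g y := by
  rw [← hg.tsum_sub hg', ← tsum_mul_left, tsum_subtype oddCoordSum (fun p => 2 * g p)]
  congr with p
  by_cases hp : Odd (coordSum p)
  · simp only [hp.neg_one_zpow, neg_mul, one_mul, sub_neg_eq_add,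
      Set.indicator_of_mem (show p ∈ oddCoordSum from hp)]
    ring
  · simp [Set.indicator_of_notMem (show p ∉ oddCoordSum from hp),
      (Int.not_odd_iff_even.mp hp).neg_one_zpow]

lemma hasSum_pow_four {ι R : Type*} [NormedRing R] [CompleteSpace R] {f : ι → R}
    (hf : Summable fun i => ‖f i‖) :
    HasSum (fun p : ι × ι × ι × ι => f p.1 * (f p.2.1 * (f p.2.2.1 * f p.2.2.2)))
      ((∑' i, f i) ^ 4) := by
  have h : HasSum f (∑' i, f i) := hf.of_norm.hasSum
  have n2 : Summable fun p : ι × ι => ‖f p.1 * f p.2‖ := hf.mul_norm hf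
  have n3 : Summable fun p : ι × ι × ι => ‖f p.1 * (f p.2.1 * f p.2.2)‖ :=
    hf.mul_norm (g := fun p : ι × ι => f p.1 * f p.2) n2
  have n4 : Summable fun p : ι × ι × ι × ι => ‖f p.1 * (f p.2.1 * (f p.2.2.1 * f p.2.2.2))‖ :=
    hf.mul_norm (g := fun p : ι × ι × ι => f p.1 * (f p.2.1 * f p.2.2)) n3
  have h2 := h.mul h n2.of_norm
  have h3 := HasSum.mul (g := fun p : ι × ι => f p.1 * f p.2) h h2 n3.of_norm
  have h4 := HasSum.mul (g := fun p : ι × ι × ι => f p.1 * (f p.2.1 * f p.2.2)) h h3 n4.of_norm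
  rwa [pow_succ', pow_succ', pow_succ', pow_one]

lemma summable_norm_zpow_of_natAbs_le {𝕜 : Type*} [NormedDivisionRing 𝕜] {q : 𝕜}
    (hq0 : q ≠ 0) (hq : ‖q‖ < 1) {e : ℤ → ℤ} {c : ℤ} (he : ∀ n, (n.natAbs : ℤ) ≤ e n + c) :
    Summable fun n => ‖q ^ e n‖ := by
  have hr : 0 < ‖q‖ := norm_pos_iff.mpr hq0
  have geom : Summable fun n : ℤ => ‖q‖ ^ n.natAbs :=
    .of_nat_of_neg (by simpa using summable_geometric_of_lt_one hr.le hq)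
      (by simpa using summable_geometric_of_lt_one hr.le hq)
  refine (geom.mul_left (‖q‖ ^ (-c))).of_nonneg_of_le (fun _ => norm_nonneg _) fun n => ?_
  rw [norm_zpow, ← zpow_natCast, ← zpow_add₀ hr.ne']
  exact zpow_le_zpow_right_of_le_one₀ hr hq.le (by linarith [he n])

lemma hasSum_zpow_coordSum_mul_zpow_sumSq {𝕜 : Type*} [NormedField 𝕜] [CompleteSpace 𝕜]
    {u q : 𝕜} (hu : u ≠ 0) (hq : q ≠ 0) (hs : Summable fun n : ℤ => ‖u ^ n * q ^ (n ^ 2)‖) :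
    HasSum (fun p : ℤ⁴ => u ^ coordSum p * q ^ sumSq p)
      ((∑' n : ℤ, u ^ n * q ^ (n ^ 2)) ^ 4) := by
  convert hasSum_pow_four hs using 1
  funext ⟨a, b, c, d⟩
  simp only [coordSum, sumSq, zpow_add₀ hu, zpow_add₀ hq]
  ring

lemma summable_norm_zpow_sq {q : ℂ} (hq0 : q ≠ 0) (hq : ‖q‖ < 1) :
    Summable fun n : ℤ => ‖q ^ (n ^ 2)‖ :=
  summable_norm_zpow_of_natAbs_le hq0 hq (c := 0) fun n => by simpa using Int.natAbs_le_self_sq n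

lemma hasSum_theta3_pow_four {q : ℂ} (hq0 : q ≠ 0) (hq : ‖q‖ < 1) :
    HasSum (fun p : ℤ⁴ => q ^ sumSq p) (theta3 q ^ 4) := by
  have h := hasSum_zpow_coordSum_mul_zpow_sumSq (u := 1) one_ne_zero hq0
    (by simpa only [one_zpow, one_mul] using summable_norm_zpow_sq hq0 hq)
  simpa only [theta3, one_zpow, one_mul] using h

lemma hasSum_theta4_pow_four {q : ℂ} (hq0 : q ≠ 0) (hq : ‖q‖ < 1) :
    HasSum (fun p : ℤ⁴ => (-1 : ℂ) ^ coordSum p * q ^ sumSq p) (theta4 q ^ 4) :=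
  hasSum_zpow_coordSum_mul_zpow_sumSq (by norm_num) hq0
    (by simpa only [norm_mul, norm_zpow, norm_neg, norm_one, one_zpow, one_mul]
      using summable_norm_zpow_sq hq0 hq)

lemma theta2_eq_cpow_mul_tsum {q : ℂ} (hq0 : q ≠ 0) :
    theta2 q = q ^ ((4 : ℕ)⁻¹ : ℂ) * ∑' n : ℤ, q ^ n * q ^ (n ^ 2) := by
  rw [theta2, ← tsum_mul_left]
  refine tsum_congr fun n => ?_
  have : ((n : ℂ) + 1 / 2) ^ 2 = ((4 : ℕ)⁻¹ : ℂ) + ((n + n ^ 2 : ℤ) : ℂ) := by push_cast; ring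
  rw [this, cpow_add _ _ hq0, cpow_intCast, zpow_add₀ hq0]

lemma hasSum_theta2_pow_four {q : ℂ} (hq0 : q ≠ 0) (hq : ‖q‖ < 1) :
    HasSum (fun p : ℤ⁴ => q ^ (sumSq p + coordSum p + 1)) (theta2 q ^ 4) := by
  have hs : Summable fun n : ℤ => ‖q ^ n * q ^ (n ^ 2)‖ := by
    simp_rw [← zpow_add₀ hq0]
    refine summable_norm_zpow_of_natAbs_le hq0 hq (c := 1) fun n => ?_
    rw [Int.natCast_natAbs]
    rcases abs_cases n with ⟨h, _⟩ | ⟨h, _⟩ <;> nlinarith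
  rw [theta2_eq_cpow_mul_tsum hq0, mul_pow, cpow_nat_inv_pow _ four_ne_zero]
  refine ((hasSum_zpow_coordSum_mul_zpow_sumSq hq0 hq0 hs).mul_left q).congr_fun fun p => ?_
  rw [zpow_add₀ hq0, zpow_add₀ hq0, zpow_one]
  ring

lemma theta2_zero : theta2 0 = 0 := by
  refine (tsum_congr fun n : ℤ => zero_cpow (pow_ne_zero 2 fun h => ?_)).trans tsum_zero
  have : ((2 * n + 1 : ℤ) : ℂ) ≠ 0 := by exact_mod_cast (by omega : 2 * n + 1 ≠ 0)
  exact this (by push_cast; linear_combination 2 * h)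

lemma theta3_zero : theta3 0 = 1 := by
  rw [theta3, tsum_eq_single 0 fun n hn => zero_zpow _ (pow_ne_zero 2 hn)]
  simp

lemma theta4_zero : theta4 0 = 1 := by
  rw [theta4, tsum_eq_single 0 fun n hn => by rw [zero_zpow _ (pow_ne_zero 2 hn), mul_zero]]
  simp

/-- `θ₃(q)⁴ = θ₂(q)⁴ + θ₄(q)⁴`. -/
theorem theta3_pow_four (q : ℂ) (hq : ‖q‖ < 1) :
    theta3 q ^ 4 = theta2 q ^ 4 + theta4 q ^ 4 := by
  rcases eq_or_ne q 0 with rfl | hq0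
  · simp [theta2_zero, theta3_zero, theta4_zero]
  have h2 := hasSum_theta2_pow_four hq0 hq
  have h3 := hasSum_theta3_pow_four hq0 hq
  have h4 := hasSum_theta4_pow_four hq0 hq
  rw [← sub_eq_iff_eq_add, ← h2.tsum_eq, ← h3.tsum_eq, ← h4.tsum_eq,
    tsum_sub_tsum_neg_one_zpow_mul h3.summable h4.summable,
    tsum_sumSq_add_coordSum_add_one (f := fun k => q ^ k) h2.summable]
end

section
/- Ramanujan's general theta function f(a,b) = ∑_{n∈ℤ} a^{n(n+1)/2} b^{n(n-1)/2} satisfies the product formula f(a,b) = (−a; ab)_∞ (−b; ab)_∞ (ab; ab)_∞. -/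
/-!
With `q = ab`, the finite triple product
`∑_{|k| ≤ m} [2m, m + k]_q a^(k(k+1)/2) b^(k(k-1)/2) = ∏_{i < m} (1 + a q^i) (1 + b q^i)`
follows by induction on `m` from the two Pascal rules for Gaussian binomials. As `m → ∞` the
central binomials `[2m, m + k]_q` tend to `1 / (q; q)_∞` and stay uniformly bounded, so Tannery's
theorem passes to the limit. When `a = 0` or `b = 0` the series has just two nonzero terms.
-/

open Filter Topology Finset Function

namespace RamanujanTheta

section Algebra

variable {F : Type*} [Field F] {q : F}

/-- `(q; q)_n`. -/
def qPoch (q : F) (n : ℕ) : F := ∏ i ∈ range n, (1 - q ^ (i + 1))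

/-- The Gaussian binomial coefficient `[N, k]_q`, extended by zero to all `k : ℤ`, so that
sums over `k` have finite support and no boundary terms. -/
def qBinom (q : F) (N : ℕ) (k : ℤ) : F :=
  if 0 ≤ k ∧ k ≤ N then qPoch q N / (qPoch q k.toNat * qPoch q (N - k.toNat)) else 0

lemma qPoch_zero : qPoch q 0 = 1 := prod_range_zero _

lemma qPoch_succ (n : ℕ) : qPoch q (n + 1) = qPoch q n * (1 - q ^ (n + 1)) :=
  prod_range_succ _ _

lemma qPoch_ne_zero (hq : ∀ n : ℕ, q ^ (n + 1) ≠ 1) (n : ℕ) : qPoch q n ≠ 0 :=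
  prod_ne_zero_iff.2 fun i _ => sub_ne_zero.2 (hq i).symm

lemma qBinom_of_neg {N : ℕ} {k : ℤ} (hk : k < 0) : qBinom q N k = 0 :=
  if_neg (by omega)

lemma qBinom_of_lt {N : ℕ} {k : ℤ} (hk : (N : ℤ) < k) : qBinom q N k = 0 :=
  if_neg (by omega)

lemma qBinom_natCast {N k : ℕ} (hk : k ≤ N) :
    qBinom q N k = qPoch q N / (qPoch q k * qPoch q (N - k)) := by
  rw [qBinom, if_pos (by omega), Int.toNat_natCast]

lemma qBinom_zero_right (hq : ∀ n : ℕ, q ^ (n + 1) ≠ 1) (N : ℕ) : qBinom q N 0 = 1 := by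
  rw [← Nat.cast_zero, qBinom_natCast N.zero_le, qPoch_zero, one_mul, Nat.sub_zero,
    div_self (qPoch_ne_zero hq N)]

lemma qBinom_self (hq : ∀ n : ℕ, q ^ (n + 1) ≠ 1) (N : ℕ) : qBinom q N N = 1 := by
  rw [qBinom_natCast le_rfl, Nat.sub_self, qPoch_zero, mul_one, div_self (qPoch_ne_zero hq N)]

lemma qBinom_symm (N : ℕ) (k : ℤ) : qBinom q N (N - k) = qBinom q N k := by
  unfold qBinom
  by_cases hk : 0 ≤ k ∧ k ≤ N
  · rw [if_pos (by omega), if_pos hk, mul_comm, show N - (N - k).toNat = k.toNat by omega,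
      show (N - k : ℤ).toNat = N - k.toNat by omega]
  · rw [if_neg (by omega), if_neg hk]

/-- The Pascal rule inside the range `0 < k ≤ N`, with `k = i + 1` and `N = i + j + 1`. It rests
on `1 - q^(i+j+2) = (1 - q^(j+1)) + q^(j+1) (1 - q^(i+1))`. -/
lemma qPoch_div_add_two (hq : ∀ n : ℕ, q ^ (n + 1) ≠ 1) (i j : ℕ) :
    qPoch q (i + j + 2) / (qPoch q (i + 1) * qPoch q (j + 1)) =
      qPoch q (i + j + 1) / (qPoch q (i + 1) * qPoch q j) +
        q ^ (j + 1) * (qPoch q (i + j + 1) / (qPoch q i * qPoch q (j + 1))) := by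
  have hi := qPoch_ne_zero hq i
  have hj := qPoch_ne_zero hq j
  have hi' := sub_ne_zero.2 (hq i).symm
  have hj' := sub_ne_zero.2 (hq j).symm
  rw [qPoch_succ (i + j + 1), qPoch_succ i, qPoch_succ j]
  field_simp
  ring

lemma qBinom_succ (hq : ∀ n : ℕ, q ^ (n + 1) ≠ 1) (N : ℕ) (k : ℤ) :
    qBinom q (N + 1) k = qBinom q N k + q ^ ((N : ℤ) + 1 - k) * qBinom q N (k - 1) := by
  rcases lt_or_ge k 0 with hk | hk
  · rw [qBinom_of_neg hk, qBinom_of_neg hk, qBinom_of_neg (by omega)]; ring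
  obtain ⟨k, rfl⟩ := Int.eq_ofNat_of_zero_le hk
  rcases Nat.lt_or_ge (N + 1) k with hNk | hNk
  · rw [qBinom_of_lt (by omega), qBinom_of_lt (by omega), qBinom_of_lt (by omega)]; ring
  rcases k with _ | i
  · rw [Nat.cast_zero, qBinom_zero_right hq, qBinom_zero_right hq, qBinom_of_neg (by omega)]
    ring
  rcases Nat.eq_or_lt_of_le hNk with hN | hN
  · obtain rfl : i = N := by omega
    rw [qBinom_self hq, qBinom_of_lt (by omega), Nat.cast_add_one, add_sub_cancel_right,
      qBinom_self hq, sub_self, zpow_zero]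
    ring
  obtain ⟨j, rfl⟩ : ∃ j, N = i + j + 1 := ⟨N - i - 1, by omega⟩
  rw [show ((i + j + 1 : ℕ) : ℤ) + 1 - (i + 1 : ℕ) = (j + 1 : ℕ) by push_cast; ring,
    show ((i + 1 : ℕ) : ℤ) - 1 = i by push_cast; ring, zpow_natCast,
    qBinom_natCast (by omega), qBinom_natCast (by omega), qBinom_natCast (by omega),
    show i + j + 1 + 1 - (i + 1) = j + 1 by omega, show i + j + 1 - (i + 1) = j by omega,
    show i + j + 1 - i = j + 1 by omega]
  exact qPoch_div_add_two hq i j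

lemma qBinom_succ' (hq : ∀ n : ℕ, q ^ (n + 1) ≠ 1) (N : ℕ) (k : ℤ) :
    qBinom q (N + 1) k = qBinom q N (k - 1) + q ^ k * qBinom q N k := by
  rw [← qBinom_symm, qBinom_succ hq, ← qBinom_symm N k, ← qBinom_symm N (k - 1)]
  push_cast
  ring_nf

lemma qBinom_add_two (hq : ∀ n : ℕ, q ^ (n + 1) ≠ 1) (hq₀ : q ≠ 0) (N : ℕ) (k : ℤ) :
    qBinom q (N + 2) k = qBinom q N (k - 1) * (1 + q ^ (N + 1)) + qBinom q N k * q ^ k +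
      qBinom q N (k - 2) * q ^ ((N : ℤ) + 2 - k) := by
  rw [qBinom_succ hq, qBinom_succ' hq, qBinom_succ' hq, sub_sub, one_add_one_eq_two,
    show ((N + 1 : ℕ) : ℤ) + 1 - k = N + 2 - k by push_cast; ring]
  have : q ^ ((N : ℤ) + 2 - k) * q ^ (k - 1) = q ^ (N + 1) := by
    rw [← zpow_add₀ hq₀, ← zpow_natCast]; congr 1; push_cast; ring
  linear_combination qBinom q N (k - 1) * this

variable {a b : F}

def thetaTerm (a b : F) (n : ℤ) : F := a ^ (n * (n + 1) / 2) * b ^ (n * (n - 1) / 2)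

lemma thetaTerm_zero : thetaTerm a b 0 = 1 := by simp [thetaTerm]

lemma thetaTerm_neg (n : ℤ) : thetaTerm a b (-n) = thetaTerm b a n := by
  rw [thetaTerm, thetaTerm, mul_comm]; ring_nf

lemma thetaTerm_add_one (ha : a ≠ 0) (hb : b ≠ 0) (n : ℤ) :
    thetaTerm a b (n + 1) = a * (a * b) ^ n * thetaTerm a b n := by
  have e₁ : (n + 1) * (n + 1 + 1) / 2 = n * (n - 1) / 2 + 2 * n + 1 := by ring_nf; omega
  have e₂ : (n + 1) * (n + 1 - 1) / 2 = n * (n - 1) / 2 + n := by ring_nf; omega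
  have e₃ : n * (n + 1) / 2 = n * (n - 1) / 2 + n := by ring_nf; omega
  rw [thetaTerm, thetaTerm, e₁, e₂, e₃]
  simp only [zpow_add₀ ha, zpow_add₀ hb, mul_zpow, zpow_one, two_mul]
  ring

lemma thetaTerm_sub_one (ha : a ≠ 0) (hb : b ≠ 0) (n : ℤ) :
    thetaTerm a b (n - 1) = b * (a * b) ^ (-n) * thetaTerm a b n := by
  rw [← neg_neg (n - 1), thetaTerm_neg, neg_sub', sub_neg_eq_add, thetaTerm_add_one hb ha,
    ← thetaTerm_neg, neg_neg, mul_comm b a]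

@[fun_prop]
lemma hasFiniteSupport_qBinom (N : ℕ) (j : ℤ) :
    HasFiniteSupport fun k => qBinom q N (k + j) := by
  refine (Set.finite_Icc (-j) (N - j)).subset fun k hk => ?_
  constructor <;> by_contra h <;> apply hk
  · exact qBinom_of_neg (by omega)
  · exact qBinom_of_lt (by omega)

lemma finsum_qBinom_mul_thetaTerm_succ (ha : a ≠ 0) (hb : b ≠ 0)
    (hq : ∀ n : ℕ, (a * b) ^ (n + 1) ≠ 1) (m : ℕ) :
    ∑ᶠ k : ℤ, qBinom (a * b) (2 * (m + 1)) (k + (m + 1 : ℕ)) * thetaTerm a b k =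
      (1 + a * (a * b) ^ m) * (1 + b * (a * b) ^ m) *
        ∑ᶠ k : ℤ, qBinom (a * b) (2 * m) (k + m) * thetaTerm a b k := by
  set q := a * b with hq_def
  have hq₀ : q ≠ 0 := mul_ne_zero ha hb
  have expand : ∀ k : ℤ, qBinom q (2 * (m + 1)) (k + (m + 1 : ℕ)) * thetaTerm a b k =
      (1 + q ^ (2 * m + 1)) * (qBinom q (2 * m) (k + m) * thetaTerm a b k) +
      qBinom q (2 * m) (k + (m + 1)) * (q ^ (k + (m + 1)) * thetaTerm a b k) +
      qBinom q (2 * m) (k + (m - 1)) * (q ^ ((m : ℤ) + 1 - k) * thetaTerm a b k) := by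
    intro k
    rw [show 2 * (m + 1) = 2 * m + 2 by ring, qBinom_add_two hq hq₀]
    push_cast
    ring_nf
  have shift_down :
      ∑ᶠ k : ℤ, qBinom q (2 * m) (k + (m + 1)) * (q ^ (k + (m + 1)) * thetaTerm a b k) =
        ∑ᶠ k : ℤ, b * q ^ m * (qBinom q (2 * m) (k + m) * thetaTerm a b k) := by
    rw [← finsum_comp_equiv (Equiv.subRight (1 : ℤ))]
    refine finsum_congr fun k => ?_
    rw [Equiv.subRight_apply, thetaTerm_sub_one ha hb, ← hq_def, sub_add_add_cancel,
      zpow_add₀ hq₀, zpow_neg, zpow_natCast]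
    field_simp
  have shift_up :
      ∑ᶠ k : ℤ, qBinom q (2 * m) (k + (m - 1)) * (q ^ ((m : ℤ) + 1 - k) * thetaTerm a b k) =
        ∑ᶠ k : ℤ, a * q ^ m * (qBinom q (2 * m) (k + m) * thetaTerm a b k) := by
    rw [← finsum_comp_equiv (Equiv.addRight (1 : ℤ))]
    refine finsum_congr fun k => ?_
    rw [Equiv.coe_addRight, thetaTerm_add_one ha hb, ← hq_def, add_add_sub_cancel,
      show (m : ℤ) + 1 - (k + 1) = m + -k by ring, zpow_add₀ hq₀, zpow_neg, zpow_natCast]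
    field_simp
  rw [finsum_congr expand, finsum_add_distrib, finsum_add_distrib, shift_down, shift_up,
    ← mul_finsum, ← mul_finsum, ← mul_finsum]
  · linear_combination
  all_goals fun_prop

theorem finsum_qBinom_mul_thetaTerm (ha : a ≠ 0) (hb : b ≠ 0)
    (hq : ∀ n : ℕ, (a * b) ^ (n + 1) ≠ 1) (m : ℕ) :
    ∑ᶠ k : ℤ, qBinom (a * b) (2 * m) (k + m) * thetaTerm a b k =
      ∏ i ∈ range m, (1 + a * (a * b) ^ i) * (1 + b * (a * b) ^ i) := by
  induction m with
  | zero =>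
    rw [finsum_eq_single _ 0 fun k hk => ?_]
    · simp [qBinom_zero_right hq, thetaTerm_zero]
    rcases hk.lt_or_gt with hk | hk
    · rw [qBinom_of_neg (by omega), zero_mul]
    · rw [qBinom_of_lt (by omega), zero_mul]
  | succ m ih => rw [finsum_qBinom_mul_thetaTerm_succ ha hb hq, ih, prod_range_succ, mul_comm]

end Algebra

section Analysis

variable {q : ℂ}

lemma pow_succ_ne_one (hq : ‖q‖ < 1) (n : ℕ) : q ^ (n + 1) ≠ 1 := by
  intro h
  have := pow_lt_one₀ (norm_nonneg q) hq n.succ_ne_zero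
  rw [← norm_pow, h, norm_one] at this
  exact this.false

lemma summable_norm_mul_pow (hq : ‖q‖ < 1) (c : ℂ) : Summable fun n : ℕ => ‖c * q ^ n‖ := by
  simpa [norm_mul, norm_pow] using (summable_geometric_of_lt_one (norm_nonneg q) hq).mul_left ‖c‖

lemma multipliable_one_add_mul_pow (hq : ‖q‖ < 1) (c : ℂ) :
    Multipliable fun n : ℕ => 1 + c * q ^ n :=
  multipliable_one_add_of_summable (summable_norm_mul_pow hq c)

lemma tendsto_qPoch (hq : ‖q‖ < 1) :
    Tendsto (qPoch q) atTop (𝓝 (∏' n : ℕ, (1 - q ^ (n + 1)))) :=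
  ((multipliable_one_add_mul_pow hq (-q)).congr fun n => by ring).hasProd.tendsto_prod_nat

lemma tprod_one_sub_pow_succ_ne_zero (hq : ‖q‖ < 1) : ∏' n : ℕ, (1 - q ^ (n + 1)) ≠ 0 := by
  have : (fun n : ℕ => 1 - q ^ (n + 1)) = fun n => 1 + (-q) * q ^ n := by
    ext n; ring
  rw [this]
  refine tprod_one_add_ne_zero_of_summable (fun n => ?_) (summable_norm_mul_pow hq (-q))
  rw [neg_mul, ← sub_eq_add_neg, ← pow_succ', sub_ne_zero]
  exact (pow_succ_ne_one hq n).symm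

lemma exists_norm_qBinom_le (hq : ‖q‖ < 1) : ∃ C, ∀ (N : ℕ) (k : ℤ), ‖qBinom q N k‖ ≤ C := by
  obtain ⟨A, hA⟩ := (tendsto_qPoch hq).norm.bddAbove_range
  obtain ⟨B, hB⟩ :=
    ((tendsto_qPoch hq).inv₀ (tprod_one_sub_pow_succ_ne_zero hq)).norm.bddAbove_range
  have hA₀ : 0 ≤ A := (norm_nonneg _).trans (hA ⟨0, rfl⟩)
  have hB₀ : 0 ≤ B := (norm_nonneg _).trans (hB ⟨0, rfl⟩)
  refine ⟨A * (B * B), fun N k => ?_⟩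
  unfold qBinom
  split_ifs
  · rw [div_eq_mul_inv, mul_inv, norm_mul, norm_mul]
    gcongr
    exacts [hA ⟨_, rfl⟩, hB ⟨_, rfl⟩, hB ⟨_, rfl⟩]
  · rw [norm_zero]
    positivity

lemma tendsto_qBinom_central (hq : ‖q‖ < 1) (k : ℤ) :
    Tendsto (fun m : ℕ => qBinom q (2 * m) (k + m)) atTop
      (𝓝 (∏' n : ℕ, (1 - q ^ (n + 1)))⁻¹) := by
  have hE := tprod_one_sub_pow_succ_ne_zero hq
  have hD := tendsto_qPoch hq
  have h₁ : Tendsto (fun m : ℕ => 2 * m) atTop atTop :=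
    tendsto_atTop_atTop.2 fun n => ⟨n, fun m hm => by omega⟩
  have h₂ : Tendsto (fun m : ℕ => (k + m).toNat) atTop atTop :=
    tendsto_atTop_atTop.2 fun n => ⟨n + k.natAbs, fun m hm => by omega⟩
  have h₃ : Tendsto (fun m : ℕ => 2 * m - (k + m).toNat) atTop atTop :=
    tendsto_atTop_atTop.2 fun n => ⟨n + k.natAbs, fun m hm => by omega⟩
  have := (hD.comp h₁).div ((hD.comp h₂).mul (hD.comp h₃)) (mul_ne_zero hE hE)
  rw [div_mul_cancel_left₀ hE] at this
  refine this.congr' ?_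
  filter_upwards [eventually_ge_atTop k.natAbs] with m hm
  rw [qBinom, if_pos (by omega)]
  rfl

variable {a b : ℂ}

lemma summable_norm_thetaTerm_nat (ha : a ≠ 0) (hb : b ≠ 0) (hab : ‖a * b‖ < 1) :
    Summable fun n : ℕ => ‖thetaTerm a b n‖ := by
  refine summable_of_ratio_norm_eventually_le one_half_lt_one ?_
  filter_upwards [(summable_norm_mul_pow hab a).tendsto_atTop_zero.eventually_le_const
    one_half_pos] with n hn
  rw [Nat.cast_succ, thetaTerm_add_one ha hb, norm_norm, norm_norm, norm_mul, zpow_natCast]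
  gcongr

lemma summable_norm_thetaTerm (ha : a ≠ 0) (hb : b ≠ 0) (hab : ‖a * b‖ < 1) :
    Summable fun n : ℤ => ‖thetaTerm a b n‖ :=
  .of_nat_of_neg (summable_norm_thetaTerm_nat ha hb hab) <| by
    simpa only [thetaTerm_neg] using summable_norm_thetaTerm_nat hb ha (by rwa [mul_comm])

theorem tsum_thetaTerm_eq_tprod (ha : a ≠ 0) (hb : b ≠ 0) (hab : ‖a * b‖ < 1) :
    ∑' n : ℤ, thetaTerm a b n =
      (∏' n : ℕ, (1 + a * (a * b) ^ n)) * (∏' n : ℕ, (1 + b * (a * b) ^ n)) *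
        ∏' n : ℕ, (1 - (a * b) ^ (n + 1)) := by
  obtain ⟨C, hC⟩ := exists_norm_qBinom_le hab
  have h_tannery := tendsto_tsum_of_dominated_convergence
    ((summable_norm_thetaTerm ha hb hab).mul_left C)
    (fun k => (tendsto_qBinom_central hab k).mul_const (thetaTerm a b k))
    (.of_forall fun m k => by rw [norm_mul]; gcongr; exact hC _ _)
  have h_partial : Tendsto
      (fun m : ℕ => ∑' k : ℤ, qBinom (a * b) (2 * m) (k + m) * thetaTerm a b k) atTop
      (𝓝 ((∏' n : ℕ, (1 + a * (a * b) ^ n)) * ∏' n : ℕ, (1 + b * (a * b) ^ n))) := by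
    refine ((multipliable_one_add_mul_pow hab a).hasProd.tendsto_prod_nat.mul
      (multipliable_one_add_mul_pow hab b).hasProd.tendsto_prod_nat).congr fun m => ?_
    rw [← prod_mul_distrib, ← finsum_qBinom_mul_thetaTerm ha hb (pow_succ_ne_one hab),
      tsum_eq_finsum (by fun_prop)]
  have := tendsto_nhds_unique h_tannery h_partial
  rw [tsum_mul_left, inv_mul_eq_iff_eq_mul₀ (tprod_one_sub_pow_succ_ne_zero hab)] at this
  rw [this]
  ring

lemma tsum_thetaTerm_comm (a b : ℂ) : ∑' n : ℤ, thetaTerm a b n = ∑' n : ℤ, thetaTerm b a n := by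
  rw [← (Equiv.neg ℤ).tsum_eq]
  exact tsum_congr fun n => thetaTerm_neg n

lemma tsum_thetaTerm_zero_left (b : ℂ) : ∑' n : ℤ, thetaTerm 0 b n = 1 + b := by
  rw [tsum_eq_sum (s := {0, -1}) fun n hn => ?_]
  · simp [thetaTerm]
  have : 2 ≤ n * (n + 1) := by
    simp only [mem_insert, mem_singleton, not_or] at hn
    rcases (by omega : 1 ≤ n ∨ n ≤ -2) with h | h <;> nlinarith
  rw [thetaTerm, zero_zpow _ (by omega), zero_mul]

lemma tprod_one_add_mul_zero_pow (c : ℂ) : ∏' n : ℕ, (1 + c * 0 ^ n) = 1 + c := by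
  rw [tprod_eq_mulSingle 0 fun n hn => by simp [hn]]
  simp

end Analysis

end RamanujanTheta

open RamanujanTheta

/-- Ramanujan's general theta function product formula:
`f(a,b) = ∑_{n ∈ ℤ} a^(n(n+1)/2) b^(n(n-1)/2) = (−a; ab)_∞ (−b; ab)_∞ (ab; ab)_∞`. -/
theorem ramanujan_theta_product (a b : ℂ) (hab : ‖a * b‖ < 1) :
    ∑' n : ℤ, a ^ (n * (n + 1) / 2) * b ^ (n * (n - 1) / 2) =
      (∏' n : ℕ, (1 + a * (a * b) ^ n)) * (∏' n : ℕ, (1 + b * (a * b) ^ n)) *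
        ∏' n : ℕ, (1 - (a * b) ^ (n + 1)) := by
  change ∑' n : ℤ, thetaTerm a b n = _
  rcases eq_or_ne a 0 with rfl | ha
  · simp [tsum_thetaTerm_zero_left, tprod_one_add_mul_zero_pow]
  rcases eq_or_ne b 0 with rfl | hb
  · simp [tsum_thetaTerm_comm a, tsum_thetaTerm_zero_left, tprod_one_add_mul_zero_pow]
  exact tsum_thetaTerm_eq_tprod ha hb hab
end

section
/- a(q) − a(q⁴) = 6q ψ(q²)ψ(q⁶), where a is the Borwein theta function and ψ(q)=∑_{n≥0}q^{n(n+1)/2}; equivalently ½(a(q)−a(−q)) = 3θ₂(q)θ₂(q³)/2. -/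
/-- The Borwein cubic theta function `a(q) = ∑_{m,n ∈ ℤ} q^(m²+mn+n²)`. -/
noncomputable def borweinA (q : ℂ) : ℂ :=
  ∑' p : ℤ × ℤ, q ^ (p.1 ^ 2 + p.1 * p.2 + p.2 ^ 2)

/-- Ramanujan's theta function `ψ(q) = ∑_{n≥0} q^(n(n+1)/2)`. -/
noncomputable def rpsi (q : ℂ) : ℂ := ∑' n : ℕ, q ^ (n * (n + 1) / 2)

/-!
Sort the lattice points `(m, n)` by parity, with `Q(m, n) = m² + mn + n²`. The even–even points
are `2ℤ²`, where `Q` is multiplied by `4`; they contribute `a(q⁴)`. Every other parity class lies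
on exactly two of the three "odd lines" `{n odd}`, `{m odd}`, `{m + n odd}`, and the isometries
`(m, n) ↦ (n, m)` and `(m, n) ↦ (m, -m - n)` of `Q` carry `{n odd}` onto the other two, so the
rest of `a(q)` is `3/2` times the sum over `{n odd}`. On that line `(m, n) = (a - t, 2t + 1)`
gives `Q = 1 + a(a + 1) + 3t(t + 1)`, and since `a ↦ -a - 1` fixes `a(a + 1)`, the sum factors as
`q · 2ψ(q²) · 2ψ(q⁶)`.
-/

open Function

namespace BorweinCubic

def cubicForm (p : ℤ × ℤ) : ℤ := p.1 ^ 2 + p.1 * p.2 + p.2 ^ 2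

lemma cubicForm_swap (p : ℤ × ℤ) : cubicForm p.swap = cubicForm p := by
  simp only [cubicForm, Prod.fst_swap, Prod.snd_swap]
  ring

def sndReflect : Equiv.Perm (ℤ × ℤ) :=
  Involutive.toPerm (fun p => (p.1, -p.1 - p.2)) fun p => by simp

lemma sndReflect_apply (p : ℤ × ℤ) : sndReflect p = (p.1, -p.1 - p.2) := rfl

lemma cubicForm_sndReflect (p : ℤ × ℤ) : cubicForm (sndReflect p) = cubicForm p := by
  simp only [cubicForm, sndReflect_apply]
  ring

lemma cubicForm_two_mul (p : ℤ × ℤ) : cubicForm (2 * p.1, 2 * p.2) = 4 * cubicForm p := by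
  simp only [cubicForm]
  ring

lemma cubicForm_sub_two_mul_add_one (a t : ℤ) :
    cubicForm (a - t, 2 * t + 1) = 1 + a * (a + 1) + 3 * (t * (t + 1)) := by
  simp only [cubicForm]
  ring

lemma eq_zero_of_cubicForm_eq_zero {p : ℤ × ℤ} (hp : cubicForm p = 0) : p = 0 := by
  obtain ⟨m, n⟩ := p
  simp only [cubicForm] at hp
  have hn : n = 0 := by nlinarith [sq_nonneg (2 * m + n), sq_nonneg n]
  have hm : m = 0 := by nlinarith [sq_nonneg (m + 2 * n), sq_nonneg m]
  simp [hm, hn]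

lemma abs_sub_one_le_mul_add_one (a : ℤ) : |a| - 1 ≤ a * (a + 1) := by
  rcases abs_cases a with ⟨h, _⟩ | ⟨h, _⟩ <;> nlinarith

lemma abs_sub_one_add_abs_sub_one_le_cubicForm (p : ℤ × ℤ) :
    (|p.1| - 1) + (|p.2| - 1) ≤ cubicForm p := by
  obtain ⟨m, n⟩ := p
  simp only [cubicForm]
  rcases abs_cases m with ⟨h, _⟩ | ⟨h, _⟩ <;> rcases abs_cases n with ⟨h', _⟩ | ⟨h', _⟩ <;>
    nlinarith [sq_nonneg (m + n), sq_nonneg (m - 1), sq_nonneg (n - 1), sq_nonneg (m + 1),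
      sq_nonneg (n + 1)]

section Summability

variable {r : ℝ}

lemma summable_zpow_abs (h0 : 0 ≤ r) (h1 : r < 1) : Summable fun a : ℤ => r ^ |a| := by
  have h := summable_geometric_of_lt_one h0 h1
  exact .of_nat_of_neg (by simpa using h) (by simpa using h)

lemma summable_zpow_of_abs_sub_one_le (h0 : 0 < r) (h1 : r < 1) {E : ℤ → ℤ}
    (hE : ∀ a, |a| - 1 ≤ E a) : Summable fun a => r ^ E a := by
  refine ((summable_zpow_abs h0.le h1).mul_left r⁻¹).of_nonneg_of_le (fun a => by positivity)
    fun a => ?_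
  calc r ^ E a ≤ r ^ (|a| - 1) := zpow_le_zpow_right_of_le_one₀ h0 h1.le (hE a)
    _ = r⁻¹ * r ^ |a| := by rw [zpow_sub₀ h0.ne', zpow_one, div_eq_inv_mul]

lemma summable_zpow_of_abs_sub_one_add_abs_sub_one_le (h0 : 0 < r) (h1 : r < 1)
    {E : ℤ × ℤ → ℤ} (hE : ∀ p, (|p.1| - 1) + (|p.2| - 1) ≤ E p) :
    Summable fun p => r ^ E p := by
  have h := summable_zpow_of_abs_sub_one_le h0 h1 (E := fun a => |a| - 1) fun a => le_rfl
  refine (h.mul_of_nonneg h (fun a => by positivity) fun a => by positivity).of_nonneg_of_le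
    (fun p => by positivity) fun p => ?_
  rw [← zpow_add₀ h0.ne']
  exact zpow_le_zpow_right_of_le_one₀ h0 h1.le (hE p)

end Summability

lemma summable_zpow_cubicForm {q : ℂ} (hq : ‖q‖ < 1) (hq0 : q ≠ 0) :
    Summable fun p => q ^ cubicForm p :=
  .of_norm <| by
    simpa only [norm_zpow] using summable_zpow_of_abs_sub_one_add_abs_sub_one_le
      (norm_pos_iff.mpr hq0) hq abs_sub_one_add_abs_sub_one_le_cubicForm

lemma summable_norm_zpow_mul_add_one {q : ℂ} (hq : ‖q‖ < 1) (hq0 : q ≠ 0) :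
    Summable fun a : ℤ => ‖q ^ (a * (a + 1))‖ := by
  simpa only [norm_zpow] using summable_zpow_of_abs_sub_one_le (norm_pos_iff.mpr hq0) hq
    abs_sub_one_le_mul_add_one

lemma zpow_natCast_mul_add_one (q : ℂ) (n : ℕ) :
    q ^ ((n : ℤ) * (n + 1)) = (q ^ 2) ^ (n * (n + 1) / 2) := by
  rw [← pow_mul, Nat.mul_div_cancel' (Nat.even_mul_succ_self n).two_dvd, ← zpow_natCast]
  push_cast
  rfl

lemma tsum_zpow_mul_add_one {q : ℂ} (hq : ‖q‖ < 1) (hq0 : q ≠ 0) :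
    ∑' a : ℤ, q ^ (a * (a + 1)) = 2 * rpsi (q ^ 2) := by
  have h_symm (n : ℕ) :
      q ^ (-((n : ℤ) + 1) * (-((n : ℤ) + 1) + 1)) = q ^ ((n : ℤ) * (n + 1)) := by
    ring_nf
  rw [← (summable_norm_zpow_mul_add_one hq hq0).of_norm.hasSum.nat_add_neg_add_one.tsum_eq]
  simp only [h_symm, zpow_natCast_mul_add_one, ← two_mul, tsum_mul_left, rpsi]

def evenPairs : Set (ℤ × ℤ) := {p | Even p.1 ∧ Even p.2}

def oddSnd : Set (ℤ × ℤ) := {p | Odd p.2}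

lemma two_nsmul_indicator_compl_evenPairs {E : Type*} [AddCommMonoid E] {f : ℤ × ℤ → E}
    (h_swap : ∀ p, f p.swap = f p) (h_refl : ∀ p, f (sndReflect p) = f p) (p : ℤ × ℤ) :
    2 • evenPairsᶜ.indicator f p =
      oddSnd.indicator f p + oddSnd.indicator f p.swap + oddSnd.indicator f (sndReflect p) := by
  obtain ⟨m, n⟩ := p
  have h_swap' : f (n, m) = f (m, n) := h_swap (m, n)
  have h_refl' : f (m, -m - n) = f (m, n) := h_refl (m, n)
  by_cases hm : Even m <;> by_cases hn : Even n <;>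
    simp [h_swap', sndReflect_apply, h_refl', evenPairs, oddSnd,
      ← Int.not_even_iff_odd, hm, hn, two_nsmul, parity_simps]

lemma two_nsmul_tsum_indicator_compl_evenPairs {E : Type*} [NormedAddCommGroup E]
    [CompleteSpace E] {f : ℤ × ℤ → E} (hf : Summable f) (h_swap : ∀ p, f p.swap = f p)
    (h_refl : ∀ p, f (sndReflect p) = f p) :
    2 • ∑' p, evenPairsᶜ.indicator f p = 3 • ∑' p, oddSnd.indicator f p := by
  have hg : Summable (oddSnd.indicator f) := hf.indicator _
  have hg_swap : Summable fun p : ℤ × ℤ => oddSnd.indicator f p.swap :=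
    hg.comp_injective Prod.swap_injective
  have hg_refl : Summable fun p => oddSnd.indicator f (sndReflect p) :=
    hg.comp_injective sndReflect.injective
  have h_swap_sum : ∑' p : ℤ × ℤ, oddSnd.indicator f p.swap = ∑' p, oddSnd.indicator f p :=
    (Equiv.prodComm ℤ ℤ).tsum_eq _
  have h_refl_sum : ∑' p, oddSnd.indicator f (sndReflect p) = ∑' p, oddSnd.indicator f p :=
    sndReflect.tsum_eq _
  rw [← (hf.indicator _).tsum_nsmul,
    tsum_congr (two_nsmul_indicator_compl_evenPairs h_swap h_refl),
    (hg.add hg_swap).tsum_add hg_refl, hg.tsum_add hg_swap, h_swap_sum, h_refl_sum]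
  abel

lemma tsum_indicator_range {α β γ : Type*} [AddCommMonoid α] [TopologicalSpace α] {g : γ → β}
    (hg : Injective g) (f : β → α) :
    ∑' b, (Set.range g).indicator f b = ∑' c, f (g c) := by
  rw [← tsum_subtype, tsum_range f hg]

lemma evenPairs_eq_range : evenPairs = Set.range fun p : ℤ × ℤ => (2 * p.1, 2 * p.2) := by
  ext ⟨m, n⟩
  simp [evenPairs, even_iff_exists_two_mul, eq_comm]

lemma oddSnd_eq_range : oddSnd = Set.range fun p : ℤ × ℤ => (p.1 - p.2, 2 * p.2 + 1) := by
  ext ⟨m, n⟩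
  simp only [oddSnd, Set.mem_ofPred_eq, Set.mem_range, Prod.mk.injEq, Prod.exists]
  constructor
  · rintro ⟨k, rfl⟩
    exact ⟨m + k, k, by ring, rfl⟩
  · rintro ⟨a, b, -, rfl⟩
    exact odd_two_mul_add_one b

lemma tsum_indicator_evenPairs (q : ℂ) :
    ∑' p, evenPairs.indicator (fun p => q ^ cubicForm p) p = borweinA (q ^ 4) := by
  rw [evenPairs_eq_range, tsum_indicator_range]
  · simp only [cubicForm_two_mul, zpow_mul]
    rfl
  · rintro ⟨a, b⟩ ⟨c, d⟩ h
    simp only [Prod.mk.injEq] at h ⊢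
    omega

lemma tsum_indicator_oddSnd {q : ℂ} (hq : ‖q‖ < 1) (hq0 : q ≠ 0) :
    ∑' p, oddSnd.indicator (fun p => q ^ cubicForm p) p =
      4 * q * rpsi (q ^ 2) * rpsi (q ^ 6) := by
  have hq3 : ‖q ^ 3‖ < 1 := by rw [norm_pow]; exact pow_lt_one₀ (norm_nonneg q) hq (by norm_num)
  have h_factor (p : ℤ × ℤ) : q ^ cubicForm (p.1 - p.2, 2 * p.2 + 1) =
      q * (q ^ (p.1 * (p.1 + 1)) * (q ^ 3) ^ (p.2 * (p.2 + 1))) := by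
    rw [cubicForm_sub_two_mul_add_one, zpow_add₀ hq0, zpow_add₀ hq0, zpow_one, zpow_mul q 3,
      zpow_ofNat, mul_assoc]
  rw [oddSnd_eq_range, tsum_indicator_range, tsum_congr h_factor, tsum_mul_left,
    ← tsum_mul_tsum_of_summable_norm (summable_norm_zpow_mul_add_one hq hq0)
      (summable_norm_zpow_mul_add_one hq3 (pow_ne_zero 3 hq0)),
    tsum_zpow_mul_add_one hq hq0, tsum_zpow_mul_add_one hq3 (pow_ne_zero 3 hq0), ← pow_mul]
  · ring
  · rintro ⟨a, b⟩ ⟨c, d⟩ h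
    simp only [Prod.mk.injEq] at h ⊢
    omega

lemma borweinA_zero : borweinA 0 = 1 := by
  rw [borweinA,
    tsum_eq_single 0 fun p hp => zero_zpow _ fun h => hp (eq_zero_of_cubicForm_eq_zero h)]
  simp

end BorweinCubic

open BorweinCubic in
/-- `a(q) − a(q⁴) = 6q ψ(q²) ψ(q⁶)`. -/
theorem borweinA_sub (q : ℂ) (hq : ‖q‖ < 1) :
    borweinA q - borweinA (q ^ 4) = 6 * q * rpsi (q ^ 2) * rpsi (q ^ 6) := by
  rcases eq_or_ne q 0 with rfl | hq0
  · simp [borweinA_zero]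
  set f : ℤ × ℤ → ℂ := fun p => q ^ cubicForm p
  have hf : Summable f := summable_zpow_cubicForm hq hq0
  have h_split : borweinA q = borweinA (q ^ 4) + ∑' p, evenPairsᶜ.indicator f p := by
    rw [← tsum_indicator_evenPairs, ← (hf.indicator _).tsum_add (hf.indicator _)]
    simp only [Set.indicator_self_add_compl_apply]
    rfl
  have h_odd := two_nsmul_tsum_indicator_compl_evenPairs hf
    (fun p => congrArg (q ^ ·) (cubicForm_swap p))
    (fun p => congrArg (q ^ ·) (cubicForm_sndReflect p))
  rw [tsum_indicator_oddSnd hq hq0, nsmul_eq_mul, nsmul_eq_mul] at h_odd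
  push_cast at h_odd
  linear_combination h_split + h_odd / 2
end

section
/- Let f(x,y) = 2x²+2xy+2y²+x+y and g(x,y) = 2x²+2xy+2y²+2x+3y+1. Then for every nonnegative integer n, the number of integer pairs (i,j) with f(i,j)=n equals the number of integer pairs (i,j) with g(i,j)=n. -/
/-- For `f(x,y) = 2x²+2xy+2y²+x+y` and `g(x,y) = 2x²+2xy+2y²+2x+3y+1`, the number of
integer solutions of `f(i,j) = n` equals the number of integer solutions of
`g(i,j) = n` for every nonnegative integer `n`. -/
theorem representation_counts_eq (n : ℕ) :
    {p : ℤ × ℤ | 2 * p.1 ^ 2 + 2 * p.1 * p.2 + 2 * p.2 ^ 2 + p.1 + p.2 = n}.ncard =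
      {p : ℤ × ℤ |
        2 * p.1 ^ 2 + 2 * p.1 * p.2 + 2 * p.2 ^ 2 + 2 * p.1 + 3 * p.2 + 1 = n}.ncard := by
  have hinj : Function.Injective (fun p : ℤ × ℤ => (p.1, -p.1 - p.2 - 1)) := by
    intro p q h
    simp only [Prod.mk.injEq] at h
    obtain ⟨h1, h2⟩ := h
    ext
    · exact h1
    · omega
  have himg : (fun p : ℤ × ℤ => (p.1, -p.1 - p.2 - 1)) ''
      {p : ℤ × ℤ | 2 * p.1 ^ 2 + 2 * p.1 * p.2 + 2 * p.2 ^ 2 + 2 * p.1 + 3 * p.2 + 1 = n} =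
      {p : ℤ × ℤ | 2 * p.1 ^ 2 + 2 * p.1 * p.2 + 2 * p.2 ^ 2 + p.1 + p.2 = n} := by
    ext ⟨x, y⟩
    simp only [Set.mem_image, Set.mem_setOf_eq, Prod.mk.injEq, Prod.exists]
    constructor
    · rintro ⟨a, b, hab, rfl, rfl⟩
      linear_combination hab
    · intro h
      exact ⟨x, -x - y - 1, by linear_combination h, rfl, by ring⟩
  rw [← himg, Set.ncard_image_of_injective _ hinj]
end

section
/- Let f(x,y)=2x²+2xy+2y²+x+y and let i,n be integers. Then there exists an integer j with f(i,j)=n if and only if there exists an integer k with f(i,k+1/2)=n. -/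
/-- For `f(x,y) = 2x²+2xy+2y²+x+y` and fixed integers `i, n`, there is an integer `j`
with `f(i,j) = n` iff there is an integer `k` with `f(i,k+1/2) = n`. -/
theorem integer_vs_half_integer_solutions (i n : ℤ) :
    (∃ j : ℤ, 2 * (i : ℚ) ^ 2 + 2 * i * j + 2 * (j : ℚ) ^ 2 + i + j = n) ↔
      ∃ k : ℤ, 2 * (i : ℚ) ^ 2 + 2 * i * ((k : ℚ) + 1/2) + 2 * ((k : ℚ) + 1/2) ^ 2 +
        i + ((k : ℚ) + 1/2) = n := by
  constructor
  · rintro ⟨j, hj⟩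
    refine ⟨-i - j - 1, ?_⟩
    push_cast
    linear_combination hj
  · rintro ⟨k, hk⟩
    refine ⟨-i - k - 1, ?_⟩
    push_cast
    linear_combination hk
end
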